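/- arXiv:1303.3460 — 9 statements merged into one kernel-verified Lean document; each statement's English description precedes it below -/
import Mathlib

section
/- Let n ≥ 1 and k ≥ 4 be natural numbers. Let A be a real-valued family indexed by k-tuples of indices in {1,…,n}, invariant under every permutation of its first k−2 arguments and under swapping its last two arguments, and satisfying the symmetrization condition: for every tuple (p₁,…,p_k) one has Σ_{1≤i<j≤k} A(p₁,…,p̂ᵢ,…,p̂ⱼ,…,p_k, pᵢ, pⱼ) = 0, where the hats mean that the entries pᵢ, pⱼ are removed from their positions and placed (in this order) as the last two arguments. Define T := Σ_p A(p)² (sum over all k-tuples p), M := Σ_{K,a,b,c} A(K,a,b,c)·A(K,c,a,b) (sum over all (k−3)-tuples K and indices a,b,c), and N := Σ_{K,a,b,c,d} A(K,c,d,a,b)·A(K,a,b,c,d) (sum over all (k−4)-tuples K and indices a,b,c,d). Then 2·T + (k−2)·N ≥ 0 and T + N − 2·M ≥ 0. -/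
/-- The order-preserving embedding of `Fin (k-2)` into `Fin k` avoiding the positions
`i` and `j` (intended for `i < j`). -/
def dropPair {k : ℕ} (i j : Fin k) (m : Fin (k - 2)) : Fin k :=
  if (m : ℕ) < (i : ℕ) then ⟨(m : ℕ), by have := m.isLt; omega⟩
  else if (m : ℕ) + 1 < (j : ℕ) then ⟨(m : ℕ) + 1, by have := m.isLt; omega⟩
  else ⟨(m : ℕ) + 2, by have := m.isLt; omega⟩

/-- The tuple obtained from `p` by removing the entries at positions `i` and `j`
(keeping the order of the remaining entries) and placing `p i`, `p j` (in this order)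
as the last two entries. -/
def hatTuple {n k : ℕ} (p : Fin k → Fin n) (i j : Fin k) : Fin k → Fin n :=
  fun m =>
    if h : (m : ℕ) < k - 2 then p (dropPair i j ⟨(m : ℕ), h⟩)
    else if (m : ℕ) = k - 2 then p i
    else p j

/-- The `k`-tuple whose first `k-3` entries are given by `K` and whose last three
entries are `a`, `b`, `c` (in this order). -/
def padEnd3 {n k : ℕ} (K : Fin (k - 3) → Fin n) (a b c : Fin n) : Fin k → Fin n :=
  fun m =>
    if h : (m : ℕ) < k - 3 then K ⟨(m : ℕ), h⟩
    else if (m : ℕ) = k - 3 then a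
    else if (m : ℕ) = k - 2 then b
    else c

/-- The `k`-tuple whose first `k-4` entries are given by `K` and whose last four
entries are `a`, `b`, `c`, `d` (in this order). -/
def padEnd4 {n k : ℕ} (K : Fin (k - 4) → Fin n) (a b c d : Fin n) : Fin k → Fin n :=
  fun m =>
    if h : (m : ℕ) < k - 4 then K ⟨(m : ℕ), h⟩
    else if (m : ℕ) = k - 4 then a
    else if (m : ℕ) = k - 3 then b
    else if (m : ℕ) = k - 2 then c
    else d

/-!
Write `corr A π = ∑ p, A p * A (p ∘ π)` for a permutation `π` of the `k` slots, whose last four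
are `a, b, c, d`. Then `T = corr A 1`, `N = corr A τ` for `τ = (a c)(b d)`, and `M = corr A ρ`
for a `3`-cycle `ρ` of `b, c, d`. Every permutation preserving the set `{c, d}` is a symmetry of
`A`, and multiplying `π` on either side by a symmetry does not change `corr A π`; in particular
`corr A π = corr A χ` as soon as `π` and `χ` map the same set onto `{c, d}`.

Multiplying the symmetrization condition by `A p` and summing over `p`, the pair `(i, j)`
contributes `N`, `M` or `T` according as none, one or both of `i, j` are among the last two
slots, whence `T + 2(k-2) M + C(k-2, 2) N = 0`. Expanding `∑ p, (B p - B (p ∘ γ))² ≥ 0` for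
`B = A + A ∘ τ` and `γ = (b c)` gives `T + N - 2M ≥ 0`, and the other inequality follows from
`(k-1)(2T + (k-2)N) = 2(k-2)(T + N - 2M)`.
-/

open Equiv Finset MulAction
open scoped Pointwise

variable {ι α β : Type*}

def symmetryGroup (A : (ι → α) → β) : Subgroup (Perm ι) where
  carrier := {σ | ∀ p, A (p ∘ σ) = A p}
  mul_mem' {σ τ} hσ hτ p := by
    simpa only [Perm.coe_mul, Function.comp_assoc, hσ p] using hτ (p ∘ σ)
  one_mem' _ := rfl
  inv_mem' {σ} hσ p := by
    have := hσ (p ∘ ⇑σ⁻¹)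
    rwa [Function.comp_assoc, ← Perm.coe_mul, inv_mul_cancel, Perm.coe_one, Function.comp_id,
      eq_comm] at this

theorem perm_smul_pair (σ : Perm ι) (x y : ι) : σ • ({x, y} : Set ι) = {σ x, σ y} := by
  rw [Set.smul_set_insert, Set.smul_set_singleton, Perm.smul_def, Perm.smul_def]

theorem stabilizer_pair_le [DecidableEq ι] {H : Subgroup (Perm ι)} {c d : ι}
    (hfix : ∀ σ : Perm ι, σ c = c → σ d = d → σ ∈ H) (hswap : swap c d ∈ H) :
    stabilizer (Perm ι) ({c, d} : Set ι) ≤ H := by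
  intro σ hσ
  rw [mem_stabilizer_iff, perm_smul_pair, Set.pair_eq_pair_iff] at hσ
  rcases hσ with ⟨hc, hd⟩ | ⟨hc, hd⟩
  · exact hfix σ hc hd
  · rw [← mul_swap_mul_self c d σ]
    exact H.mul_mem (hfix _ (by simp [hd]) (by simp [hc])) hswap

variable [Fintype ι] [DecidableEq ι] [Fintype α]

theorem sum_comp_perm {M : Type*} [AddCommMonoid M] (f : (ι → α) → M) (σ : Perm ι) :
    ∑ p : ι → α, f (p ∘ σ) = ∑ p, f p :=
  (σ.symm.arrowCongr (Equiv.refl α)).sum_comp f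

section CommSemiring
variable {R : Type*} [CommSemiring R] (A : (ι → α) → R)

def corr (π : Perm ι) : R := ∑ p, A p * A (p ∘ π)

theorem corr_one : corr A 1 = ∑ p, A p ^ 2 := by
  simp [corr, sq]

theorem sum_comp_mul_comp (σ π : Perm ι) :
    ∑ p : ι → α, A (p ∘ σ) * A (p ∘ π) = corr A (σ⁻¹ * π) := by
  rw [corr, ← sum_comp_perm (fun q => A q * A (q ∘ ⇑(σ⁻¹ * π))) σ]
  refine sum_congr rfl fun p _ => ?_
  rw [Function.comp_assoc, ← Perm.coe_mul, mul_inv_cancel_left]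

theorem corr_inv (π : Perm ι) : corr A π⁻¹ = corr A π := by
  have := sum_comp_mul_comp A π 1
  rw [mul_one] at this
  rw [← this, corr]
  simp [mul_comm]

theorem corr_add_comp (τ π : Perm ι) :
    corr (fun p => A p + A (p ∘ τ)) π
      = corr A π + corr A (π * τ) + corr A (τ⁻¹ * π) + corr A (τ⁻¹ * π * τ) := by
  rw [mul_assoc, ← sum_comp_mul_comp, ← sum_comp_mul_comp]
  simp only [corr, add_mul, mul_add, sum_add_distrib, Perm.coe_mul, Function.comp_assoc]
  ring

variable {A}

theorem corr_mul_right {σ : Perm ι} (hσ : σ ∈ symmetryGroup A) (π : Perm ι) :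
    corr A (π * σ) = corr A π := by
  simp only [corr, Perm.coe_mul, ← Function.comp_assoc, hσ _]

variable {c d : ι} (hG : stabilizer (Perm ι) ({c, d} : Set ι) ≤ symmetryGroup A)
include hG

theorem corr_eq_of_smul_pair_eq {π χ : Perm ι}
    (h : π • ({c, d} : Set ι) = χ • ({c, d} : Set ι)) : corr A π = corr A χ := by
  have : χ⁻¹ * π ∈ symmetryGroup A := hG <| by
    rw [mem_stabilizer_iff, mul_smul, h, inv_smul_smul]
  rw [← mul_inv_cancel_left χ π, corr_mul_right this]

theorem corr_eq_of_smul_eq_pair {π χ : Perm ι} {T : Set ι}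
    (hπ : π • T = {c, d}) (hχ : χ • T = {c, d}) : corr A π = corr A χ := by
  rw [← corr_inv A π, ← corr_inv A χ]
  refine corr_eq_of_smul_pair_eq hG ?_
  calc π⁻¹ • ({c, d} : Set ι) = T := by rw [← hπ, inv_smul_smul]
    _ = χ⁻¹ • {c, d} := by rw [← hχ, inv_smul_smul]

end CommSemiring

section CommRing
variable {R : Type*} [CommRing R]

theorem sum_sub_comp_sq (A : (ι → α) → R) (γ : Perm ι) :
    ∑ p, (A p - A (p ∘ γ)) ^ 2 = 2 * (corr A 1 - corr A γ) := by
  calc ∑ p, (A p - A (p ∘ γ)) ^ 2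
      = ∑ p, A p ^ 2 + ∑ p, A (p ∘ γ) ^ 2 - 2 * ∑ p, A p * A (p ∘ γ) := by
        rw [mul_sum, ← sum_add_distrib, ← sum_sub_distrib]
        exact sum_congr rfl fun p _ => by ring
    _ = 2 * (corr A 1 - corr A γ) := by
        rw [sum_comp_perm (fun q => A q ^ 2), corr_one, corr]
        ring

variable [LinearOrder R] [IsStrictOrderedRing R] {A : (ι → α) → R} {c d : ι}

theorem two_mul_corr_le (hG : stabilizer (Perm ι) ({c, d} : Set ι) ≤ symmetryGroup A)
    {a b : ι} (hab : a ≠ b) (hac : a ≠ c) (had : a ≠ d) (hbc : b ≠ c) (hbd : b ≠ d) (hcd : c ≠ d) :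
    2 * corr A (swap c d * swap b c) ≤ corr A 1 + corr A (swap a c * swap b d) := by
  set τ := swap a c * swap b d
  set γ := swap b c
  have := hab.symm; have := hac.symm; have := had.symm
  have := hbc.symm; have := hbd.symm; have := hcd.symm
  have hγ : corr A γ = corr A (swap c d * γ) :=
    corr_eq_of_smul_eq_pair hG (T := {b, d})
      (by simp [γ, perm_smul_pair, swap_apply_of_ne_of_ne, *])
      (by simp [γ, perm_smul_pair, swap_apply_of_ne_of_ne, *, Set.pair_comm])
  have hγτ : corr A (γ * τ) = corr A (swap c d * γ) :=
    corr_eq_of_smul_eq_pair hG (T := {b, d})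
      (by simp [γ, τ, perm_smul_pair, swap_apply_of_ne_of_ne, *, Set.pair_comm])
      (by simp [γ, perm_smul_pair, swap_apply_of_ne_of_ne, *, Set.pair_comm])
  have hτγ : corr A (τ⁻¹ * γ) = corr A (γ * τ) := by
    rw [← corr_inv, mul_inv_rev, inv_inv, swap_inv]
  have hτγτ : corr A (τ⁻¹ * γ * τ) = corr A (γ * τ) := by
    refine corr_eq_of_smul_pair_eq hG ?_
    rw [mul_assoc, mul_smul, inv_smul_eq_iff]
    simp [γ, τ, perm_smul_pair, swap_apply_of_ne_of_ne, *, Set.pair_comm]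
  have hsq := sum_sub_comp_sq (fun p => A p + A (p ∘ τ)) γ
  rw [corr_add_comp, corr_add_comp, one_mul, mul_one, inv_mul_cancel, corr_inv,
    hτγτ, hτγ, hγτ, hγ] at hsq
  have hnonneg : 0 ≤ ∑ p : ι → α, (A p + A (p ∘ τ) - (A (p ∘ γ) + A ((p ∘ γ) ∘ τ))) ^ 2 :=
    sum_nonneg fun p _ => sq_nonneg _
  linarith

end CommRing

section Counting
variable {M : Type*} [AddCommMonoid M] {k : ℕ}

theorem sum_ite_lt_const (j : Fin k) (x : M) :
    ∑ i : Fin k, (if i < j then x else 0) = (j : ℕ) • x := by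
  rw [← sum_filter, filter_gt_eq_Iio, sum_const, Fin.card_Iio]

theorem sum_fin_val_smul (x : M) : ∑ j : Fin k, (j : ℕ) • x = k.choose 2 • x := by
  rw [← sum_smul, Fin.sum_univ_eq_sum_range (fun j => j), sum_range_id, Nat.choose_two_right]

theorem sum_pairs_lt (hk : 2 ≤ k) (g : Fin k → Fin k → M) (x y z : M)
    (hx : ∀ i j : Fin k, i < j → (j : ℕ) < k - 2 → g i j = x)
    (hy : ∀ i j : Fin k, i < j → (i : ℕ) < k - 2 → k - 2 ≤ (j : ℕ) → g i j = y)
    (hz : ∀ i j : Fin k, i < j → k - 2 ≤ (i : ℕ) → g i j = z) :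
    ∑ i, ∑ j, (if i < j then g i j else 0) = (k - 2).choose 2 • x + (2 * (k - 2)) • y + z := by
  obtain ⟨m, rfl⟩ := Nat.exists_eq_add_of_le' hk
  simp only [Nat.add_sub_cancel] at hx hy hz ⊢
  rw [sum_comm, Fin.sum_univ_castSucc, Fin.sum_univ_castSucc]
  have hlow (j : Fin m) :
      ∑ i, (if i < j.castSucc.castSucc then g i j.castSucc.castSucc else 0) = (j : ℕ) • x := by
    calc _ = ∑ i, (if i < j.castSucc.castSucc then x else 0) :=
          sum_congr rfl fun i _ => by split_ifs with h; exacts [hx _ _ h (by simp), rfl]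
      _ = _ := by rw [sum_ite_lt_const, Fin.val_castSucc, Fin.val_castSucc]
  have hmid : ∑ i, (if i < (Fin.last m).castSucc then g i (Fin.last m).castSucc else 0)
      = m • y := by
    calc _ = ∑ i, (if i < (Fin.last m).castSucc then y else 0) :=
          sum_congr rfl fun i _ => by
            split_ifs with h
            exacts [hy _ _ h (by simpa [Fin.lt_def] using h) (by simp), rfl]
      _ = _ := by rw [sum_ite_lt_const, Fin.val_castSucc, Fin.val_last]
  have htop : ∑ i, (if i < Fin.last (m + 1) then g i (Fin.last (m + 1)) else 0) = m • y + z := by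
    calc _ = ∑ i, ((if i < (Fin.last m).castSucc then y else 0)
              + (if i = (Fin.last m).castSucc then z else 0)) :=
          sum_congr rfl fun i _ => by
            have hi := i.isLt
            simp only [Fin.lt_def, Fin.ext_iff, Fin.val_last, Fin.val_castSucc]
            rcases lt_trichotomy (i : ℕ) m with h | h | h
            · rw [if_pos (by omega), if_pos h, if_neg (by omega), add_zero,
                hy _ _ (by simp [Fin.lt_def]; omega) h (by simp)]
            · rw [if_pos (by omega), if_neg (by omega), if_pos h, zero_add,
                hz _ _ (by simp [Fin.lt_def]; omega) h.ge]
            · rw [if_neg (by omega), if_neg (by omega), if_neg (by omega), add_zero]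
      _ = _ := by rw [sum_add_distrib, sum_ite_lt_const, sum_ite_eq', if_pos (mem_univ _),
          Fin.val_castSucc, Fin.val_last]
  rw [sum_congr rfl fun j _ => hlow j, hmid, htop, sum_fin_val_smul]
  simp only [two_mul, add_smul, add_assoc]
end Counting

section Slots
variable {k : ℕ} (hk : 4 ≤ k)

def slotA : Fin k := ⟨k - 4, Nat.sub_lt (by omega) (by norm_num)⟩
def slotB : Fin k := ⟨k - 3, Nat.sub_lt (by omega) (by norm_num)⟩
def slotC : Fin k := ⟨k - 2, Nat.sub_lt (by omega) (by norm_num)⟩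
def slotD : Fin k := ⟨k - 1, Nat.sub_lt (by omega) (by norm_num)⟩

theorem val_slots : (slotA hk : ℕ) = k - 4 ∧ (slotB hk : ℕ) = k - 3 ∧ (slotC hk : ℕ) = k - 2 ∧
    (slotD hk : ℕ) = k - 1 := ⟨rfl, rfl, rfl, rfl⟩

@[simp] theorem slotA_ne_slotB : slotA hk ≠ slotB hk := by simp [slotA, slotB, Fin.ext_iff]; omega
@[simp] theorem slotA_ne_slotC : slotA hk ≠ slotC hk := by simp [slotA, slotC, Fin.ext_iff]; omega
@[simp] theorem slotA_ne_slotD : slotA hk ≠ slotD hk := by simp [slotA, slotD, Fin.ext_iff]; omega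
@[simp] theorem slotB_ne_slotC : slotB hk ≠ slotC hk := by simp [slotB, slotC, Fin.ext_iff]; omega
@[simp] theorem slotB_ne_slotD : slotB hk ≠ slotD hk := by simp [slotB, slotD, Fin.ext_iff]; omega
@[simp] theorem slotC_ne_slotD : slotC hk ≠ slotD hk := by simp [slotC, slotD, Fin.ext_iff]; omega

theorem lt_or_eq_slot (m : Fin k) :
    (m : ℕ) < k - 4 ∨ m = slotA hk ∨ m = slotB hk ∨ m = slotC hk ∨ m = slotD hk := by
  simp only [Fin.ext_iff, val_slots]
  omega

def swapLastPairs : Perm (Fin k) := swap (slotA hk) (slotC hk) * swap (slotB hk) (slotD hk)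
def rotateLastThree : Perm (Fin k) := swap (slotC hk) (slotD hk) * swap (slotB hk) (slotC hk)

theorem ne_slots_of_lt {m : Fin k} (hm : (m : ℕ) < k - 4) :
    m ≠ slotA hk ∧ m ≠ slotB hk ∧ m ≠ slotC hk ∧ m ≠ slotD hk := by
  simp only [ne_eq, Fin.ext_iff, val_slots]
  omega

theorem swapLastPairs_of_lt {m : Fin k} (hm : (m : ℕ) < k - 4) : swapLastPairs hk m = m := by
  obtain ⟨hA, hB, hC, hD⟩ := ne_slots_of_lt hk hm
  rw [swapLastPairs, Perm.mul_apply, swap_apply_of_ne_of_ne hB hD, swap_apply_of_ne_of_ne hA hC]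

theorem rotateLastThree_of_lt {m : Fin k} (hm : (m : ℕ) < k - 4) : rotateLastThree hk m = m := by
  obtain ⟨-, hB, hC, hD⟩ := ne_slots_of_lt hk hm
  rw [rotateLastThree, Perm.mul_apply, swap_apply_of_ne_of_ne hB hC, swap_apply_of_ne_of_ne hC hD]

variable {n : ℕ}

section padEnd4
variable {K : Fin (k - 4) → Fin n} {a b c d : Fin n}

theorem padEnd4_of_lt {m : Fin k} (hm : (m : ℕ) < k - 4) :
    padEnd4 K a b c d m = K ⟨m, hm⟩ := dif_pos hm

@[simp] theorem padEnd4_slotA : padEnd4 K a b c d (slotA hk) = a := by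
  have := val_slots hk; simp only [padEnd4]; split_ifs <;> first | rfl | omega
@[simp] theorem padEnd4_slotB : padEnd4 K a b c d (slotB hk) = b := by
  have := val_slots hk; simp only [padEnd4]; split_ifs <;> first | rfl | omega
@[simp] theorem padEnd4_slotC : padEnd4 K a b c d (slotC hk) = c := by
  have := val_slots hk; simp only [padEnd4]; split_ifs <;> first | rfl | omega
@[simp] theorem padEnd4_slotD : padEnd4 K a b c d (slotD hk) = d := by
  have := val_slots hk; simp only [padEnd4]; split_ifs <;> first | rfl | omega

end padEnd4

section padEnd3
variable {K : Fin (k - 3) → Fin n} {a b c : Fin n}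

theorem padEnd3_of_lt {m : Fin k} (hm : (m : ℕ) < k - 3) :
    padEnd3 K a b c m = K ⟨m, hm⟩ := dif_pos hm

@[simp] theorem padEnd3_slotA : padEnd3 K a b c (slotA hk) = K ⟨k - 4, by omega⟩ := by
  have := val_slots hk; simp only [padEnd3]; split_ifs <;> first | rfl | omega
@[simp] theorem padEnd3_slotB : padEnd3 K a b c (slotB hk) = a := by
  have := val_slots hk; simp only [padEnd3]; split_ifs <;> first | rfl | omega
@[simp] theorem padEnd3_slotC : padEnd3 K a b c (slotC hk) = b := by
  have := val_slots hk; simp only [padEnd3]; split_ifs <;> first | rfl | omega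
@[simp] theorem padEnd3_slotD : padEnd3 K a b c (slotD hk) = c := by
  have := val_slots hk; simp only [padEnd3]; split_ifs <;> first | rfl | omega

end padEnd3

theorem padEnd4_comp_swapLastPairs (K : Fin (k - 4) → Fin n) (a b c d : Fin n) :
    padEnd4 K a b c d ∘ swapLastPairs hk = padEnd4 K c d a b := by
  funext m
  rcases lt_or_eq_slot hk m with hm | rfl | rfl | rfl | rfl
  · simp [swapLastPairs_of_lt hk hm, padEnd4_of_lt hm]
  all_goals simp [swapLastPairs, swap_apply_of_ne_of_ne, (slotA_ne_slotB hk).symm,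
    (slotA_ne_slotD hk).symm, (slotB_ne_slotC hk).symm, (slotC_ne_slotD hk).symm]

theorem padEnd3_comp_rotateLastThree (K : Fin (k - 3) → Fin n) (a b c : Fin n) :
    padEnd3 K a b c ∘ rotateLastThree hk = padEnd3 K c a b := by
  funext m
  rcases lt_or_eq_slot hk m with hm | rfl | rfl | rfl | rfl
  · simp [rotateLastThree_of_lt hk hm, padEnd3_of_lt (show (m : ℕ) < k - 3 by omega)]
  all_goals simp [rotateLastThree, swap_apply_of_ne_of_ne, (slotB_ne_slotD hk).symm,
    (slotC_ne_slotD hk).symm]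

def padEnd4Equiv : (Fin (k - 4) → Fin n) × Fin n × Fin n × Fin n × Fin n ≃ (Fin k → Fin n) where
  toFun x := padEnd4 x.1 x.2.1 x.2.2.1 x.2.2.2.1 x.2.2.2.2
  invFun p := (fun m => p ⟨m, by omega⟩, p (slotA hk), p (slotB hk), p (slotC hk), p (slotD hk))
  left_inv := by
    rintro ⟨K, a, b, c, d⟩
    simp only [padEnd4_slotA, padEnd4_slotB, padEnd4_slotC, padEnd4_slotD, Prod.mk.injEq,
      and_true]
    exact funext fun m => padEnd4_of_lt m.isLt
  right_inv p := by
    funext m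
    rcases lt_or_eq_slot hk m with hm | rfl | rfl | rfl | rfl
    · exact padEnd4_of_lt hm
    all_goals simp

def padEnd3Equiv : (Fin (k - 3) → Fin n) × Fin n × Fin n × Fin n ≃ (Fin k → Fin n) where
  toFun x := padEnd3 x.1 x.2.1 x.2.2.1 x.2.2.2
  invFun p := (fun m => p ⟨m, by omega⟩, p (slotB hk), p (slotC hk), p (slotD hk))
  left_inv := by
    rintro ⟨K, a, b, c⟩
    simp only [padEnd3_slotB, padEnd3_slotC, padEnd3_slotD, Prod.mk.injEq, and_true]
    exact funext fun m => padEnd3_of_lt m.isLt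
  right_inv p := by
    funext m
    rcases lt_or_eq_slot hk m with hm | rfl | rfl | rfl | rfl
    · exact padEnd3_of_lt (by omega)
    · exact padEnd3_of_lt (by rw [(val_slots hk).1]; omega)
    all_goals simp

include hk in
theorem sum_padEnd4 {M : Type*} [AddCommMonoid M] (f : (Fin k → Fin n) → M) :
    ∑ K : Fin (k - 4) → Fin n, ∑ a, ∑ b, ∑ c, ∑ d, f (padEnd4 K a b c d) = ∑ p, f p := by
  simp only [← (padEnd4Equiv hk).sum_comp, Fintype.sum_prod_type]
  rfl

include hk in
theorem sum_padEnd3 {M : Type*} [AddCommMonoid M] (f : (Fin k → Fin n) → M) :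
    ∑ K : Fin (k - 3) → Fin n, ∑ a, ∑ b, ∑ c, f (padEnd3 K a b c) = ∑ p, f p := by
  simp only [← (padEnd3Equiv hk).sum_comp, Fintype.sum_prod_type]
  rfl

theorem stabilizer_slotC_slotD_le {R : Type*} {A : (Fin k → Fin n) → R}
    (hsym₁ : ∀ (p : Fin k → Fin n) (σ : Perm (Fin k)),
      (∀ m : Fin k, k - 2 ≤ (m : ℕ) → σ m = m) → A (fun m => p (σ m)) = A p)
    (hsym₂ : ∀ p : Fin k → Fin n, A (fun m => p (swap (slotC hk) (slotD hk) m)) = A p) :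
    stabilizer (Perm (Fin k)) ({slotC hk, slotD hk} : Set (Fin k)) ≤ symmetryGroup A := by
  refine stabilizer_pair_le (fun σ hc hd p => hsym₁ p σ fun m hm => ?_) hsym₂
  obtain rfl | rfl : m = slotC hk ∨ m = slotD hk := by
    have := m.isLt
    simp only [Fin.ext_iff, val_slots]
    omega
  exacts [hc, hd]

theorem corr_swapLastPairs {R : Type*} [CommSemiring R] (A : (Fin k → Fin n) → R) :
    corr A (swapLastPairs hk) = ∑ K : Fin (k - 4) → Fin n, ∑ a, ∑ b, ∑ c, ∑ d,
      A (padEnd4 K c d a b) * A (padEnd4 K a b c d) := by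
  rw [corr, ← sum_padEnd4 hk]
  simp only [padEnd4_comp_swapLastPairs, mul_comm]

theorem corr_rotateLastThree {R : Type*} [CommSemiring R] (A : (Fin k → Fin n) → R) :
    corr A (rotateLastThree hk) = ∑ K : Fin (k - 3) → Fin n, ∑ a, ∑ b, ∑ c,
      A (padEnd3 K a b c) * A (padEnd3 K c a b) := by
  rw [corr, ← sum_padEnd3 hk]
  simp only [padEnd3_comp_rotateLastThree]

end Slots

section Hat
variable {k : ℕ}

theorem hatTuple_eq_comp {n : ℕ} (p : Fin k → Fin n) (i j : Fin k) :
    hatTuple p i j = p ∘ hatTuple id i j := by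
  funext m
  simp only [hatTuple, Function.comp]
  split_ifs <;> rfl

theorem val_hatTuple_id (i j m : Fin k) :
    (hatTuple id i j m : ℕ) =
      if (m : ℕ) < k - 2 then
        (if (m : ℕ) < i then (m : ℕ) else if (m : ℕ) + 1 < j then (m : ℕ) + 1 else (m : ℕ) + 2)
      else if (m : ℕ) = k - 2 then (i : ℕ) else (j : ℕ) := by
  simp only [hatTuple, id, dropPair]
  split_ifs <;> rfl

theorem hatTuple_id_injective {i j : Fin k} (hij : i < j) :
    Function.Injective (hatTuple id i j) := by
  intro m m' h
  have hij' : (i : ℕ) < j := hij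
  have := m.isLt; have := m'.isLt; have := j.isLt
  rw [Fin.ext_iff, val_hatTuple_id, val_hatTuple_id] at h
  rw [Fin.ext_iff]
  split_ifs at h <;> omega

noncomputable def hatPerm {i j : Fin k} (hij : i < j) : Perm (Fin k) :=
  Equiv.ofBijective _ (Finite.injective_iff_bijective.mp (hatTuple_id_injective hij))

theorem hatPerm_apply {i j : Fin k} (hij : i < j) (m : Fin k) :
    hatPerm hij m = hatTuple id i j m := rfl

variable (hk : 4 ≤ k) {n : ℕ} {R : Type*} [CommSemiring R] {A : (Fin k → Fin n) → R}
  {i j : Fin k} (hij : i < j)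

theorem sum_mul_hatTuple : ∑ p, A p * A (hatTuple p i j) = corr A (hatPerm hij) :=
  sum_congr rfl fun p _ => by rw [hatTuple_eq_comp]; rfl

variable (hG : stabilizer (Perm (Fin k)) ({slotC hk, slotD hk} : Set (Fin k)) ≤ symmetryGroup A)
include hG

theorem corr_hatPerm_of_lt (hj : (j : ℕ) < k - 2) :
    corr A (hatPerm hij) = corr A (swapLastPairs hk) := by
  have hij' : (i : ℕ) < j := hij
  obtain ⟨hA, hB, hC, hD⟩ := val_slots hk
  refine corr_eq_of_smul_eq_pair hG (T := {slotA hk, slotB hk}) ?_ ?_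
  · rw [perm_smul_pair]
    congr 2 <;> ext <;> simp only [hatPerm_apply, val_hatTuple_id, hA, hB, hC, hD] <;>
      split_ifs <;> omega
  · simp [perm_smul_pair, swapLastPairs, swap_apply_of_ne_of_ne, (slotA_ne_slotD hk).symm,
      (slotC_ne_slotD hk).symm]

theorem corr_hatPerm_of_lt_of_le (hi : (i : ℕ) < k - 2) (hj : k - 2 ≤ (j : ℕ)) :
    corr A (hatPerm hij) = corr A (rotateLastThree hk) := by
  have hij' : (i : ℕ) < j := hij
  have := j.isLt
  obtain ⟨hA, hB, hC, hD⟩ := val_slots hk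
  refine corr_eq_of_smul_eq_pair hG (T := {slotB hk, slotD hk}) ?_ ?_
  · rw [perm_smul_pair, Set.pair_eq_pair_iff]
    simp only [Fin.ext_iff, hatPerm_apply, val_hatTuple_id, hB, hC, hD]
    split_ifs <;> omega
  · simp [perm_smul_pair, rotateLastThree, swap_apply_of_ne_of_ne, Set.pair_comm,
      (slotB_ne_slotD hk).symm, (slotC_ne_slotD hk).symm]

theorem corr_hatPerm_of_le (hi : k - 2 ≤ (i : ℕ)) : corr A (hatPerm hij) = corr A 1 := by
  have hij' : (i : ℕ) < j := hij
  have := j.isLt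
  obtain ⟨-, -, hC, hD⟩ := val_slots hk
  refine corr_eq_of_smul_pair_eq hG ?_
  rw [one_smul, perm_smul_pair]
  congr 2 <;> ext <;> simp only [hatPerm_apply, val_hatTuple_id, hC, hD] <;> split_ifs <;> omega

theorem corr_linear_relation
    (hsym₀ : ∀ p : Fin k → Fin n,
      ∑ i : Fin k, ∑ j : Fin k, (if i < j then A (hatTuple p i j) else 0) = 0) :
    (k - 2).choose 2 • corr A (swapLastPairs hk) + (2 * (k - 2)) • corr A (rotateLastThree hk)
      + corr A 1 = 0 := by
  rw [← sum_pairs_lt (by omega) (fun i j => ∑ p, A p * A (hatTuple p i j))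
    (corr A (swapLastPairs hk)) (corr A (rotateLastThree hk)) (corr A 1)
    (fun i j hij hj => by rw [sum_mul_hatTuple hij, corr_hatPerm_of_lt hk hij hG hj])
    (fun i j hij hi hj => by rw [sum_mul_hatTuple hij, corr_hatPerm_of_lt_of_le hk hij hG hi hj])
    (fun i j hij hi => by rw [sum_mul_hatTuple hij, corr_hatPerm_of_le hk hij hG hi])]
  calc _ = ∑ i : Fin k, ∑ p, ∑ j : Fin k, (if i < j then A p * A (hatTuple p i j) else 0) :=
        sum_congr rfl fun i _ => by rw [sum_comm]; simp only [sum_ite_irrel, sum_const_zero]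
    _ = ∑ p, A p * ∑ i : Fin k, ∑ j : Fin k, (if i < j then A (hatTuple p i j) else 0) := by
        rw [sum_comm]; simp only [mul_sum, mul_ite, mul_zero]
    _ = 0 := by simp [hsym₀]

end Hat

/-- Lemma "lpos": for a tensor `A`, symmetric in its first `k-2` slots and in its
last two slots, whose full symmetrization vanishes, one has `2T + (k-2)N ≥ 0` and
`T + N - 2M ≥ 0`. -/
theorem lpos_identity (n k : ℕ) (hk : 4 ≤ k)
    (A : (Fin k → Fin n) → ℝ)
    (hsym₁ : ∀ (p : Fin k → Fin n) (σ : Equiv.Perm (Fin k)),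
      (∀ m : Fin k, k - 2 ≤ (m : ℕ) → σ m = m) → A (fun m => p (σ m)) = A p)
    (hsym₂ : ∀ p : Fin k → Fin n,
      A (fun m => p (Equiv.swap (⟨k - 2, by omega⟩ : Fin k) (⟨k - 1, by omega⟩ : Fin k) m))
        = A p)
    (hsym₀ : ∀ p : Fin k → Fin n,
      ∑ i : Fin k, ∑ j : Fin k, (if i < j then A (hatTuple p i j) else 0) = 0) :
    2 * (∑ p : Fin k → Fin n, (A p) ^ 2)
        + ((k : ℝ) - 2) *
          (∑ K : Fin (k - 4) → Fin n, ∑ a : Fin n, ∑ b : Fin n, ∑ c : Fin n, ∑ d : Fin n,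
            A (padEnd4 K c d a b) * A (padEnd4 K a b c d)) ≥ 0 ∧
      (∑ p : Fin k → Fin n, (A p) ^ 2)
        + (∑ K : Fin (k - 4) → Fin n, ∑ a : Fin n, ∑ b : Fin n, ∑ c : Fin n, ∑ d : Fin n,
            A (padEnd4 K c d a b) * A (padEnd4 K a b c d))
        - 2 * (∑ K : Fin (k - 3) → Fin n, ∑ a : Fin n, ∑ b : Fin n, ∑ c : Fin n,
            A (padEnd3 K a b c) * A (padEnd3 K c a b)) ≥ 0 := by
  have hG := stabilizer_slotC_slotD_le hk hsym₁ hsym₂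
  have hrel := corr_linear_relation hk hG hsym₀
  have hsos : 2 * corr A (rotateLastThree hk) ≤ corr A 1 + corr A (swapLastPairs hk) :=
    two_mul_corr_le hG (slotA_ne_slotB hk) (slotA_ne_slotC hk) (slotA_ne_slotD hk)
      (slotB_ne_slotC hk) (slotB_ne_slotD hk) (slotC_ne_slotD hk)
  rw [← corr_one, ← corr_swapLastPairs hk, ← corr_rotateLastThree hk]
  set T := corr A 1
  set N := corr A (swapLastPairs hk)
  set M := corr A (rotateLastThree hk)
  rw [nsmul_eq_mul, nsmul_eq_mul, Nat.cast_choose_two, Nat.cast_mul, Nat.cast_sub (by omega),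
    Nat.cast_ofNat] at hrel
  have hk' : (4 : ℝ) ≤ k := by exact_mod_cast hk
  have key : ((k : ℝ) - 1) * (2 * T + (k - 2) * N) = 2 * ((k : ℝ) - 2) * (T + N - 2 * M) := by
    linear_combination 2 * hrel
  refine ⟨nonneg_of_mul_nonneg_right ?_ (by linarith : (0 : ℝ) < k - 1), by linarith⟩
  rw [key]
  exact mul_nonneg (by linarith) (by linarith)
end

section
/- Let k ≥ 4 be an integer and let T, M, N be real numbers with T ≥ 0. Assume that for every real number t: T·t² + 2·((k−2)(k−3)/2)·N·t + ((k−2)(k−3)/2)·T + ((k−2)(k−3)/2)·((k−4)(k−5)/2)·N + 2·((k−2)(k−3)/2)·(k−4)·M ≥ 0, where by convention (k−4)(k−5)/2 is replaced by 0 when k = 4 or k = 5 interpreted as the binomial coefficient C(k−4,2). Assume moreover that 2·T + (k−2)·((k−3)·N + 4·M) = 0. Then 2·T + (k−2)·N ≥ 0 and T + N − 2·M ≥ 0. -/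
/-!
Evaluate the quadratic at `t = k - 3`. Eliminating `M` with the Ricci identity, its value there
collapses to `C(k-2,2) · (2T + (k-2)N)`, and `C(k-2,2) > 0` for `k ≥ 4`; this gives the first
inequality. The Ricci identity also gives `2(k-2)(T + N - 2M) = (k-1)(2T + (k-2)N)`, so the second
inequality follows from the first.
-/

lemma cast_choose_two_sub (k j : ℕ) (h : j ≤ k) :
    (((k - j).choose 2 : ℕ) : ℝ) = ((k : ℝ) - j) * ((k : ℝ) - j - 1) / 2 := by
  rw [Nat.cast_choose_two, Nat.cast_sub h]

section RicciIdentity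

variable {k T M N : ℝ}

lemma lpos_quadratic_at_eq_of_ricci
    (hRicci : 2 * T + (k - 2) * ((k - 3) * N + 4 * M) = 0) :
    T * (k - 3) ^ 2 + 2 * ((k - 2) * (k - 3) / 2) * N * (k - 3)
        + (k - 2) * (k - 3) / 2 * T
        + (k - 2) * (k - 3) / 2 * ((k - 4) * (k - 4 - 1) / 2) * N
        + 2 * ((k - 2) * (k - 3) / 2) * (k - 4) * M
      = (k - 2) * (k - 3) / 2 * (2 * T + (k - 2) * N) := by
  linear_combination (k - 3) * (k - 4) / 4 * hRicci

lemma mul_T_add_N_sub_two_M_eq_of_ricci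
    (hRicci : 2 * T + (k - 2) * ((k - 3) * N + 4 * M) = 0) :
    2 * (k - 2) * (T + N - 2 * M) = (k - 1) * (2 * T + (k - 2) * N) := by
  linear_combination -hRicci

end RicciIdentity

theorem lpos_discriminant_general (k : ℕ) (hk : 4 ≤ k) (T M N : ℝ)
    (hquad : ∀ t : ℝ,
      T * t ^ 2 + 2 * ((Nat.choose (k - 2) 2 : ℝ)) * N * t
        + (Nat.choose (k - 2) 2 : ℝ) * T
        + (Nat.choose (k - 2) 2 : ℝ) * (Nat.choose (k - 4) 2 : ℝ) * N
        + 2 * (Nat.choose (k - 2) 2 : ℝ) * ((k : ℝ) - 4) * M ≥ 0)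
    (hconstraint : 2 * T + ((k : ℝ) - 2) * (((k : ℝ) - 3) * N + 4 * M) = 0) :
    2 * T + ((k : ℝ) - 2) * N ≥ 0 ∧ T + N - 2 * M ≥ 0 := by
  have hk' : (4 : ℝ) ≤ k := by exact_mod_cast hk
  have hval := hquad ((k : ℝ) - 3)
  rw [cast_choose_two_sub k 2 (by omega), cast_choose_two_sub k 4 hk] at hval
  push_cast at hval
  rw [show (k : ℝ) - 2 - 1 = k - 3 by ring, lpos_quadratic_at_eq_of_ricci hconstraint] at hval
  have hfirst : 0 ≤ 2 * T + ((k : ℝ) - 2) * N :=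
    nonneg_of_mul_nonneg_right hval (by nlinarith)
  have hsecond : 0 ≤ 2 * ((k : ℝ) - 2) * (T + N - 2 * M) := by
    rw [mul_T_add_N_sub_two_M_eq_of_ricci hconstraint]
    exact mul_nonneg (by linarith) hfirst
  exact ⟨hfirst, nonneg_of_mul_nonneg_right hsecond (by linarith)⟩

/-- The discriminant argument in the proof of Lemma "lpos": if the quadratic
polynomial `|Γ(t)|²` is nonnegative for all `t` and the symmetrized Ricci identity
`2T + (k-2)((k-3)N + 4M) = 0` holds, then `2T + (k-2)N ≥ 0` and `T + N - 2M ≥ 0`. -/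
theorem lpos_discriminant (k : ℕ) (hk : 4 ≤ k) (T M N : ℝ) (hT : 0 ≤ T)
    (hquad : ∀ t : ℝ,
      T * t ^ 2 + 2 * ((Nat.choose (k - 2) 2 : ℝ)) * N * t
        + (Nat.choose (k - 2) 2 : ℝ) * T
        + (Nat.choose (k - 2) 2 : ℝ) * (Nat.choose (k - 4) 2 : ℝ) * N
        + 2 * (Nat.choose (k - 2) 2 : ℝ) * ((k : ℝ) - 4) * M ≥ 0)
    (hconstraint : 2 * T + ((k : ℝ) - 2) * (((k : ℝ) - 3) * N + 4 * M) = 0) :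
    2 * T + ((k : ℝ) - 2) * N ≥ 0 ∧ T + N - 2 * M ≥ 0 :=
  lpos_discriminant_general k hk T M N hquad hconstraint
end

section
/- Let ω ≥ 1 be a natural number and let T, M, N : ℕ → ℝ be sequences such that for every natural number ℓ with 0 ≤ ℓ ≤ ⌊(ω−1)/2⌋: T(ℓ) ≥ 0, 2·T(ℓ) + (ω−2ℓ)·((ω−2ℓ−1)·N(ℓ) + 4·M(ℓ)) = 0, and 2·T(ℓ) + (ω−2ℓ)·N(ℓ) ≥ 0. Then Σ_{ℓ=0}^{⌊(ω−1)/2⌋} d(ω,ℓ)·( ((ω+1)(ω−2ℓ) − (ω+4))·T(ℓ) − 2(ω−2ℓ)(ω+2)·M(ℓ) ) ≥ Σ_{ℓ=0}^{⌊(ω−1)/2⌋} 2ℓ·d(ω,ℓ)·T(ℓ). -/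
/-- The rational coefficient `d(γ,ℓ) = 2^(γ-2ℓ)·(γ!)³ / ((γ-2ℓ)!·(ℓ!)²)` for `2ℓ ≤ γ`,
and `0` when `2ℓ > γ`. -/
def dCoeff (γ ℓ : ℕ) : ℚ :=
  if 2 * ℓ ≤ γ then
    2 ^ (γ - 2 * ℓ) * (γ.factorial : ℚ) ^ 3
      / (((γ - 2 * ℓ).factorial : ℚ) * ((ℓ.factorial : ℚ)) ^ 2)
  else 0

/-! The inequality holds summand by summand: with `k = ω - 2ℓ ≥ 1`, eliminating `M` via the
symmetry relation turns the difference of the two summands into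
`d(ω,ℓ)·(ω+2)·(k-1)/2·(2T + kN)`, a product of nonnegative factors. -/

lemma dCoeff_nonneg (γ ℓ : ℕ) : 0 ≤ dCoeff γ ℓ := by
  unfold dCoeff
  split <;> positivity

section Summand

variable {K : Type*} [Field K] [LinearOrder K] [IsStrictOrderedRing K]

lemma aubin_summand_sub_eq (w l d T M N : K)
    (hsym : 2 * T + (w - 2 * l) * ((w - 2 * l - 1) * N + 4 * M) = 0) :
    d * (((w + 1) * (w - 2 * l) - (w + 4)) * T - 2 * (w - 2 * l) * (w + 2) * M)
      - 2 * l * d * T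
      = d * (w + 2) * (w - 2 * l - 1) / 2 * (2 * T + (w - 2 * l) * N) := by
  linear_combination (-(d * (w + 2)) / 2) * hsym

lemma aubin_summand_le (w l d T M N : K) (hd : 0 ≤ d) (hw : 0 ≤ w + 2)
    (hk : 1 ≤ w - 2 * l)
    (hsym : 2 * T + (w - 2 * l) * ((w - 2 * l - 1) * N + 4 * M) = 0)
    (hpos : 0 ≤ 2 * T + (w - 2 * l) * N) :
    2 * l * d * T ≤
      d * (((w + 1) * (w - 2 * l) - (w + 4)) * T - 2 * (w - 2 * l) * (w + 2) * M) := by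
  have hdiff := aubin_summand_sub_eq w l d T M N hsym
  have hfactor : 0 ≤ d * (w + 2) * (w - 2 * l - 1) / 2 * (2 * T + (w - 2 * l) * N) := by
    have : 0 ≤ w - 2 * l - 1 := by linarith
    positivity
  linarith

end Summand

theorem aubin_I2_general (ω : ℕ) (hω : 1 ≤ ω) (T M N : ℕ → ℝ)
    (hsym : ∀ ℓ : ℕ, ℓ ≤ (ω - 1) / 2 →
      2 * T ℓ + ((ω : ℝ) - 2 * ℓ) * (((ω : ℝ) - 2 * ℓ - 1) * N ℓ + 4 * M ℓ) = 0)
    (hpos : ∀ ℓ : ℕ, ℓ ≤ (ω - 1) / 2 →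
      2 * T ℓ + ((ω : ℝ) - 2 * ℓ) * N ℓ ≥ 0) :
    ∑ ℓ ∈ Finset.range ((ω - 1) / 2 + 1),
        ((dCoeff ω ℓ : ℚ) : ℝ) *
          ((((ω : ℝ) + 1) * ((ω : ℝ) - 2 * ℓ) - ((ω : ℝ) + 4)) * T ℓ
            - 2 * ((ω : ℝ) - 2 * ℓ) * ((ω : ℝ) + 2) * M ℓ)
      ≥ ∑ ℓ ∈ Finset.range ((ω - 1) / 2 + 1),
          2 * (ℓ : ℝ) * ((dCoeff ω ℓ : ℚ) : ℝ) * T ℓ := by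
  refine Finset.sum_le_sum fun ℓ hℓ => ?_
  have hℓ : ℓ ≤ (ω - 1) / 2 := Nat.lt_succ_iff.mp (Finset.mem_range.mp hℓ)
  have hk : 1 ≤ (ω : ℝ) - 2 * ℓ := by
    have : ((2 * ℓ + 1 : ℕ) : ℝ) ≤ ω := by exact_mod_cast (by omega : 2 * ℓ + 1 ≤ ω)
    push_cast at this
    linarith
  exact aubin_summand_le _ _ _ _ _ _ (by exact_mod_cast dCoeff_nonneg ω ℓ) (by positivity) hk
    (hsym ℓ hℓ) (hpos ℓ hℓ)

/-- Inequality (I2) in the final step of the proof of Aubin's theorem. -/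
theorem aubin_I2 (ω : ℕ) (hω : 1 ≤ ω) (T M N : ℕ → ℝ)
    (hT : ∀ ℓ : ℕ, ℓ ≤ (ω - 1) / 2 → 0 ≤ T ℓ)
    (hsym : ∀ ℓ : ℕ, ℓ ≤ (ω - 1) / 2 →
      2 * T ℓ + ((ω : ℝ) - 2 * ℓ) * (((ω : ℝ) - 2 * ℓ - 1) * N ℓ + 4 * M ℓ) = 0)
    (hpos : ∀ ℓ : ℕ, ℓ ≤ (ω - 1) / 2 →
      2 * T ℓ + ((ω : ℝ) - 2 * ℓ) * N ℓ ≥ 0) :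
    ∑ ℓ ∈ Finset.range ((ω - 1) / 2 + 1),
        ((dCoeff ω ℓ : ℚ) : ℝ) *
          ((((ω : ℝ) + 1) * ((ω : ℝ) - 2 * ℓ) - ((ω : ℝ) + 4)) * T ℓ
            - 2 * ((ω : ℝ) - 2 * ℓ) * ((ω : ℝ) + 2) * M ℓ)
      ≥ ∑ ℓ ∈ Finset.range ((ω - 1) / 2 + 1),
          2 * (ℓ : ℝ) * ((dCoeff ω ℓ : ℚ) : ℝ) * T ℓ :=
  aubin_I2_general ω hω T M N hsym hpos
end

section
/- Let ω ≥ 1 be a natural number and let T, M, N : ℕ → ℝ be sequences such that for every natural number ℓ with 0 ≤ ℓ ≤ ⌊(ω−1)/2⌋: T(ℓ) ≥ 0, 2·T(ℓ) + (ω−2ℓ)·((ω−2ℓ−1)·N(ℓ) + 4·M(ℓ)) = 0, and 2·T(ℓ) + (ω−2ℓ)·N(ℓ) ≥ 0. Then Σ_{ℓ=0}^{⌊(ω−1)/2⌋} 2ℓ·d(ω,ℓ)·( (ω(ω−2ℓ) − 4ℓ − 5)·T(ℓ) − 2(ω−2ℓ)(ω+2)·M(ℓ) ) ≥ − Σ_{ℓ=0}^{⌊(ω−1)/2⌋}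 2ℓ·d(ω,ℓ)·T(ℓ). -/
lemma bracket_add_nonneg_of_symm {ω ℓ : ℕ} {T M N : ℝ} (hℓ : 2 * ℓ + 1 ≤ ω)
    (hsym : 2 * T + ((ω : ℝ) - 2 * ℓ) * (((ω : ℝ) - 2 * ℓ - 1) * N + 4 * M) = 0)
    (hpos : 0 ≤ 2 * T + ((ω : ℝ) - 2 * ℓ) * N) :
    0 ≤ (((ω : ℝ) * ((ω : ℝ) - 2 * ℓ) - 4 * ℓ - 5) * T
          - 2 * ((ω : ℝ) - 2 * ℓ) * ((ω : ℝ) + 2) * M) + T := by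
  have hℓR : (2 * ℓ + 1 : ℝ) ≤ ω := by exact_mod_cast hℓ
  have key : (((ω : ℝ) * ((ω : ℝ) - 2 * ℓ) - 4 * ℓ - 5) * T
        - 2 * ((ω : ℝ) - 2 * ℓ) * ((ω : ℝ) + 2) * M) + T
      = ((ω : ℝ) + 2) * ((ω : ℝ) - 2 * ℓ - 1) / 2 * (2 * T + ((ω : ℝ) - 2 * ℓ) * N) := by
    linear_combination (-((ω : ℝ) + 2) / 2) * hsym
  rw [key]
  exact mul_nonneg (div_nonneg (mul_nonneg (by positivity) (by linarith)) zero_le_two) hpos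

theorem aubin_I1_general (ω : ℕ) (hω : 1 ≤ ω) (T M N : ℕ → ℝ)
    (hsym : ∀ ℓ : ℕ, ℓ ≤ (ω - 1) / 2 →
      2 * T ℓ + ((ω : ℝ) - 2 * ℓ) * (((ω : ℝ) - 2 * ℓ - 1) * N ℓ + 4 * M ℓ) = 0)
    (hpos : ∀ ℓ : ℕ, ℓ ≤ (ω - 1) / 2 →
      2 * T ℓ + ((ω : ℝ) - 2 * ℓ) * N ℓ ≥ 0) :
    ∑ ℓ ∈ Finset.range ((ω - 1) / 2 + 1),
        2 * (ℓ : ℝ) * ((dCoeff ω ℓ : ℚ) : ℝ) *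
          (((ω : ℝ) * ((ω : ℝ) - 2 * ℓ) - 4 * ℓ - 5) * T ℓ
            - 2 * ((ω : ℝ) - 2 * ℓ) * ((ω : ℝ) + 2) * M ℓ)
      ≥ -∑ ℓ ∈ Finset.range ((ω - 1) / 2 + 1),
          2 * (ℓ : ℝ) * ((dCoeff ω ℓ : ℚ) : ℝ) * T ℓ := by
  rw [ge_iff_le, neg_le_iff_add_nonneg, ← Finset.sum_add_distrib]
  refine Finset.sum_nonneg fun ℓ hℓ => ?_
  have hℓ' : ℓ ≤ (ω - 1) / 2 := Nat.lt_succ_iff.mp (Finset.mem_range.mp hℓ)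
  have hweight : 0 ≤ 2 * (ℓ : ℝ) * ((dCoeff ω ℓ : ℚ) : ℝ) := by
    have := dCoeff_nonneg ω ℓ
    positivity
  rw [← mul_add]
  exact mul_nonneg hweight
    (bracket_add_nonneg_of_symm (by omega) (hsym ℓ hℓ') (hpos ℓ hℓ'))

/-- Inequality (I1) in the final step of the proof of Aubin's theorem. -/
theorem aubin_I1 (ω : ℕ) (hω : 1 ≤ ω) (T M N : ℕ → ℝ)
    (hT : ∀ ℓ : ℕ, ℓ ≤ (ω - 1) / 2 → 0 ≤ T ℓ)
    (hsym : ∀ ℓ : ℕ, ℓ ≤ (ω - 1) / 2 →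
      2 * T ℓ + ((ω : ℝ) - 2 * ℓ) * (((ω : ℝ) - 2 * ℓ - 1) * N ℓ + 4 * M ℓ) = 0)
    (hpos : ∀ ℓ : ℕ, ℓ ≤ (ω - 1) / 2 →
      2 * T ℓ + ((ω : ℝ) - 2 * ℓ) * N ℓ ≥ 0) :
    ∑ ℓ ∈ Finset.range ((ω - 1) / 2 + 1),
        2 * (ℓ : ℝ) * ((dCoeff ω ℓ : ℚ) : ℝ) *
          (((ω : ℝ) * ((ω : ℝ) - 2 * ℓ) - 4 * ℓ - 5) * T ℓ
            - 2 * ((ω : ℝ) - 2 * ℓ) * ((ω : ℝ) + 2) * M ℓ)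
      ≥ -∑ ℓ ∈ Finset.range ((ω - 1) / 2 + 1),
          2 * (ℓ : ℝ) * ((dCoeff ω ℓ : ℚ) : ℝ) * T ℓ :=
  aubin_I1_general ω hω T M N hsym hpos
end

section
/- Let ω ≥ 1 be a natural number and let T, M, N : ℕ → ℝ be sequences such that for every natural number ℓ with 0 ≤ ℓ ≤ ⌊(ω−1)/2⌋: T(ℓ) ≥ 0, 2·T(ℓ) + (ω−2ℓ)·((ω−2ℓ−1)·N(ℓ) + 4·M(ℓ)) = 0, and 2·T(ℓ) + (ω−2ℓ)·N(ℓ) ≥ 0. Define ℐ₁ := Σ_{ℓ=0}^{⌊(ω−1)/2⌋} 2ℓ·d(ω,ℓ)·( (ω(ω−2ℓ) − 4ℓ − 5)·T(ℓ) − 2(ω−2ℓ)(ω+2)·M(ℓ) ) and ℐ₂ := Σ_{ℓ=0}^{⌊(ω−1)/2⌋} d(ω,ℓ)·( ((ω+1)(ω−2ℓ) − (ω+4))·T(ℓ) − 2(ω−2ℓ)(ω+2)·M(ℓ) ). Then ℐ₁ + ℐ₂ ≥ 0. -/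
lemma aubin_summand_eq {d w l t m n : ℝ}
    (h : 2 * t + (w - 2 * l) * ((w - 2 * l - 1) * n + 4 * m) = 0) :
    2 * l * d * ((w * (w - 2 * l) - 4 * l - 5) * t - 2 * (w - 2 * l) * (w + 2) * m)
      + d * (((w + 1) * (w - 2 * l) - (w + 4)) * t - 2 * (w - 2 * l) * (w + 2) * m)
      = d * (2 * l + 1) * (w + 2) * (w - 2 * l - 1) / 2 * (2 * t + (w - 2 * l) * n) := by
  linear_combination (-(d * (2 * l + 1) * (w + 2) / 2)) * h

lemma aubin_summand_nonneg {d w l t m n : ℝ} (hd : 0 ≤ d) (hl : 0 ≤ l) (hwl : 1 ≤ w - 2 * l)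
    (h : 2 * t + (w - 2 * l) * ((w - 2 * l - 1) * n + 4 * m) = 0)
    (hpos : 0 ≤ 2 * t + (w - 2 * l) * n) :
    0 ≤ 2 * l * d * ((w * (w - 2 * l) - 4 * l - 5) * t - 2 * (w - 2 * l) * (w + 2) * m)
      + d * (((w + 1) * (w - 2 * l) - (w + 4)) * t - 2 * (w - 2 * l) * (w + 2) * m) := by
  rw [aubin_summand_eq h]
  have hw : 0 ≤ w + 2 := by linarith
  have hk : 0 ≤ w - 2 * l - 1 := by linarith
  positivity

theorem aubin_I1_add_I2_general (ω : ℕ) (hω : 1 ≤ ω) (T M N : ℕ → ℝ)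
    (hsym : ∀ ℓ : ℕ, ℓ ≤ (ω - 1) / 2 →
      2 * T ℓ + ((ω : ℝ) - 2 * ℓ) * (((ω : ℝ) - 2 * ℓ - 1) * N ℓ + 4 * M ℓ) = 0)
    (hpos : ∀ ℓ : ℕ, ℓ ≤ (ω - 1) / 2 →
      2 * T ℓ + ((ω : ℝ) - 2 * ℓ) * N ℓ ≥ 0)
    (I₁ I₂ : ℝ)
    (hI₁ : I₁ = ∑ ℓ ∈ Finset.range ((ω - 1) / 2 + 1),
        2 * (ℓ : ℝ) * ((dCoeff ω ℓ : ℚ) : ℝ) *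
          (((ω : ℝ) * ((ω : ℝ) - 2 * ℓ) - 4 * ℓ - 5) * T ℓ
            - 2 * ((ω : ℝ) - 2 * ℓ) * ((ω : ℝ) + 2) * M ℓ))
    (hI₂ : I₂ = ∑ ℓ ∈ Finset.range ((ω - 1) / 2 + 1),
        ((dCoeff ω ℓ : ℚ) : ℝ) *
          ((((ω : ℝ) + 1) * ((ω : ℝ) - 2 * ℓ) - ((ω : ℝ) + 4)) * T ℓ
            - 2 * ((ω : ℝ) - 2 * ℓ) * ((ω : ℝ) + 2) * M ℓ)) :
    I₁ + I₂ ≥ 0 := by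
  rw [hI₁, hI₂, ← Finset.sum_add_distrib]
  refine Finset.sum_nonneg fun ℓ hℓ => ?_
  have hℓω : ℓ ≤ (ω - 1) / 2 := Nat.lt_succ_iff.mp (Finset.mem_range.mp hℓ)
  have hk : 1 ≤ (ω : ℝ) - 2 * ℓ := by
    have : 2 * ℓ + 1 ≤ ω := by omega
    rw [le_sub_iff_add_le']
    exact_mod_cast this
  exact aubin_summand_nonneg (by exact_mod_cast dCoeff_nonneg ω ℓ) ℓ.cast_nonneg hk
    (hsym ℓ hℓω) (hpos ℓ hℓω)

/-- The concluding positivity step of the proof of Aubin's theorem: `ℐ₁ + ℐ₂ ≥ 0`. -/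
theorem aubin_I1_add_I2 (ω : ℕ) (hω : 1 ≤ ω) (T M N : ℕ → ℝ)
    (hT : ∀ ℓ : ℕ, ℓ ≤ (ω - 1) / 2 → 0 ≤ T ℓ)
    (hsym : ∀ ℓ : ℕ, ℓ ≤ (ω - 1) / 2 →
      2 * T ℓ + ((ω : ℝ) - 2 * ℓ) * (((ω : ℝ) - 2 * ℓ - 1) * N ℓ + 4 * M ℓ) = 0)
    (hpos : ∀ ℓ : ℕ, ℓ ≤ (ω - 1) / 2 →
      2 * T ℓ + ((ω : ℝ) - 2 * ℓ) * N ℓ ≥ 0)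
    (I₁ I₂ : ℝ)
    (hI₁ : I₁ = ∑ ℓ ∈ Finset.range ((ω - 1) / 2 + 1),
        2 * (ℓ : ℝ) * ((dCoeff ω ℓ : ℚ) : ℝ) *
          (((ω : ℝ) * ((ω : ℝ) - 2 * ℓ) - 4 * ℓ - 5) * T ℓ
            - 2 * ((ω : ℝ) - 2 * ℓ) * ((ω : ℝ) + 2) * M ℓ))
    (hI₂ : I₂ = ∑ ℓ ∈ Finset.range ((ω - 1) / 2 + 1),
        ((dCoeff ω ℓ : ℚ) : ℝ) *
          ((((ω : ℝ) + 1) * ((ω : ℝ) - 2 * ℓ) - ((ω : ℝ) + 4)) * T ℓ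
            - 2 * ((ω : ℝ) - 2 * ℓ) * ((ω : ℝ) + 2) * M ℓ)) :
    I₁ + I₂ ≥ 0 :=
  aubin_I1_add_I2_general ω hω T M N hsym hpos I₁ I₂ hI₁ hI₂
end

section
/- For every natural number ω, the following identity of rational numbers holds: (ω+2)·Σ_{k=ω}^{2ω} (k+1)·C(k,ω) = (ω+3)²·C(ω), where C(k,ω) is the binomial coefficient and C(ω) := (ω+1)²·(ω+2)²·(2ω+2)! / ((ω+3)!)². -/
/-! Since `(k + 1) * C(k, ω) = (ω + 1) * C(k + 1, ω + 1)`, the hockey-stick identity sums the left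
side to `(ω + 2) * (ω + 1) * C(2ω + 2, ω + 2)`, and writing this binomial coefficient with
factorials turns the identity into a rational-function identity in `ω`. -/

open Finset Nat

theorem sum_Icc_succ_mul_choose (m n : ℕ) :
    ∑ k ∈ Icc m n, (k + 1) * k.choose m = (m + 1) * (n + 2).choose (m + 2) := by
  calc ∑ k ∈ Icc m n, (k + 1) * k.choose m
      = (m + 1) * ∑ k ∈ Icc m n, (k + 1).choose (m + 1) := by
        rw [mul_sum]
        refine sum_congr rfl fun k _ => ?_
        rw [add_one_mul_choose_eq, mul_comm]
    _ = (m + 1) * ∑ j ∈ Icc (m + 1) (n + 1), j.choose (m + 1) := by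
        rw [← map_add_right_Icc, sum_map]
        rfl
    _ = (m + 1) * (n + 2).choose (m + 2) := by rw [sum_Icc_choose]

/-- Combinatorial identity (comb1): `(ω+2)·Σ_{k=ω}^{2ω} (k+1)·C(k,ω) = (ω+3)²·C(ω)`,
where `C(ω) = (ω+1)²(ω+2)²(2ω+2)!/((ω+3)!)²`. -/
theorem comb1 (ω : ℕ) :
    ((ω : ℚ) + 2) * ∑ k ∈ Finset.Icc ω (2 * ω), ((k : ℚ) + 1) * (k.choose ω : ℚ)
      = ((ω : ℚ) + 3) ^ 2 *
        (((ω : ℚ) + 1) ^ 2 * ((ω : ℚ) + 2) ^ 2 * ((2 * ω + 2).factorial : ℚ)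
          / (((ω + 3).factorial : ℚ)) ^ 2) := by
  have hsum : ∑ k ∈ Icc ω (2 * ω), ((k : ℚ) + 1) * (k.choose ω : ℚ)
      = (ω + 1) * ((2 * ω + 2).choose (ω + 2) : ℚ) := by
    exact_mod_cast sum_Icc_succ_mul_choose ω (2 * ω)
  have hcompl : 2 * ω + 2 - (ω + 2) = ω := by omega
  rw [hsum, cast_choose ℚ (by omega : ω + 2 ≤ 2 * ω + 2), hcompl]
  push_cast [factorial_succ]
  field_simp
  ring
end

section
/- For every natural number ω, the following identity of rational numbers holds: (ω+2)·Σ_{k=ω}^{2ω−1} (k+1)·(2ω−k)·C(k,ω) = ω·(ω+3)·C(ω), where C(k,ω) is the binomial coefficient and C(ω) := (ω+1)²·(ω+2)²·(2ω+2)! / ((ω+3)!)² (for ω = 0 the sum is empty and both sides vanish). -/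
/-! Since `(k + 1) * C(k, ω) = (ω + 1) * C(k + 1, ω + 1)`, the hockey-stick identity gives
`∑_{k < n} (k + 1) * C(k, ω) = (ω + 1) * C(n + 1, ω + 2)`. The weight `n - k` sums these partial
sums once more, so `∑_{k < n} (k + 1) * (n - k) * C(k, ω) = (ω + 1) * C(n + 2, ω + 3)`.
For `n = 2ω` the identity is then a rewriting of `C(2ω + 2, ω + 3)` in factorials. -/

open Finset

namespace Nat

theorem sum_range_add_one_mul_choose (w n : ℕ) :
    ∑ k ∈ range n, (k + 1) * k.choose w = (w + 1) * (n + 1).choose (w + 2) := by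
  induction n with
  | zero => simp [choose_eq_zero_of_lt]
  | succ n ih =>
    rw [sum_range_succ, ih, add_one_mul_choose_eq, choose_succ_succ (n + 1) (w + 1)]
    ring

theorem sum_range_add_one_mul_sub_mul_choose (w n : ℕ) :
    ∑ k ∈ range n, (k + 1) * (n - k) * k.choose w = (w + 1) * (n + 2).choose (w + 3) := by
  induction n with
  | zero => simp [choose_eq_zero_of_lt]
  | succ n ih =>
    have hsplit : ∀ k ∈ range n, (k + 1) * (n + 1 - k) * k.choose w
        = (k + 1) * (n - k) * k.choose w + (k + 1) * k.choose w := by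
      intro k hk
      rw [show n + 1 - k = n - k + 1 by have := mem_range.1 hk; omega]
      ring
    rw [sum_range_succ, sum_congr rfl hsplit, sum_add_distrib, ih, add_assoc,
      Nat.add_sub_cancel_left, mul_one, ← sum_range_succ (fun k => (k + 1) * k.choose w),
      sum_range_add_one_mul_choose, choose_succ_succ (n + 2) (w + 2)]
    ring

end Nat

theorem sum_Ico_add_one_mul_sub_mul_choose (w n : ℕ) :
    ∑ k ∈ Ico w n, ((k : ℚ) + 1) * ((n : ℚ) - k) * (k.choose w : ℚ)
      = ((w : ℚ) + 1) * ((n + 2).choose (w + 3) : ℚ) := by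
  rcases le_or_gt w n with hwn | hnw
  · have hlow : ∑ k ∈ range w, (k + 1) * (n - k) * k.choose w = 0 :=
      sum_eq_zero fun k hk => by rw [Nat.choose_eq_zero_of_lt (mem_range.1 hk), mul_zero]
    have hnat := Nat.sum_range_add_one_mul_sub_mul_choose w n
    rw [← sum_range_add_sum_Ico _ hwn, hlow, zero_add] at hnat
    have hcast := congrArg (Nat.cast : ℕ → ℚ) hnat
    push_cast at hcast
    rw [← hcast]
    refine sum_congr rfl fun k hk => ?_
    rw [Nat.cast_sub (mem_Ico.1 hk).2.le]
  · rw [Ico_eq_empty_of_le hnw.le, sum_empty, Nat.choose_eq_zero_of_lt (by omega)]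
    simp

/-- Combinatorial identity (comb2): `(ω+2)·Σ_{k=ω}^{2ω-1} (k+1)(2ω-k)·C(k,ω) = ω(ω+3)·C(ω)`,
where `C(ω) = (ω+1)²(ω+2)²(2ω+2)!/((ω+3)!)²` (for `ω = 0` the sum is empty). -/
theorem comb2 (ω : ℕ) :
    ((ω : ℚ) + 2) *
        ∑ k ∈ Finset.Ico ω (2 * ω), ((k : ℚ) + 1) * (2 * (ω : ℚ) - (k : ℚ)) * (k.choose ω : ℚ)
      = (ω : ℚ) * ((ω : ℚ) + 3) *
        (((ω : ℚ) + 1) ^ 2 * ((ω : ℚ) + 2) ^ 2 * ((2 * ω + 2).factorial : ℚ)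
          / (((ω + 3).factorial : ℚ)) ^ 2) := by
  have hsum := sum_Ico_add_one_mul_sub_mul_choose ω (2 * ω)
  push_cast at hsum
  rw [hsum]
  rcases ω with _ | m
  · simp
  rw [Nat.cast_choose ℚ (by omega), show 2 * (m + 1) + 2 - (m + 1 + 3) = m by omega]
  simp only [show m + 1 + 3 = m + 3 + 1 from rfl, show m + 3 = m + 2 + 1 from rfl,
    show m + 2 = m + 1 + 1 from rfl, Nat.factorial_succ]
  push_cast
  field_simp
  ring
end

section
/- For all natural numbers ω and ℓ with ω ≥ 2 and 2ℓ ≤ ω − 2, the following identity of rational numbers holds: (ω−1)!·(ω−2)!·Σ_{k=2ℓ}^{ω−2} 2^(ω−k−1)·(k+1)·d(k,ℓ) / (k!)² = e(ω,ℓ). -/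
/-- The rational coefficient `e(γ,ℓ) = 2^(γ-2ℓ-2)·γ!·(γ-1)!·(γ-2)! / ((γ-2ℓ-2)!·(ℓ+1)!·ℓ!)`
for `2ℓ+2 ≤ γ`, and `0` when `2ℓ+2 > γ`. -/
def eCoeff (γ ℓ : ℕ) : ℚ :=
  if 2 * ℓ + 2 ≤ γ then
    2 ^ (γ - 2 * ℓ - 2) * (γ.factorial : ℚ) * ((γ - 1).factorial : ℚ)
        * ((γ - 2).factorial : ℚ)
      / (((γ - 2 * ℓ - 2).factorial : ℚ) * ((ℓ + 1).factorial : ℚ) * (ℓ.factorial : ℚ))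
  else 0

open Finset Nat

lemma sum_Icc_succ_choose_succ (j n : ℕ) :
    ∑ k ∈ Icc j n, (k + 1).choose (j + 1) = (n + 2).choose (j + 2) := by
  rw [← sum_Icc_choose (n + 1) (j + 1), ← map_add_right_Icc j n 1, sum_map]
  rfl

lemma two_pow_mul_succ_mul_dCoeff_div {ω k ℓ : ℕ} (hk : 2 * ℓ ≤ k) (hkω : k < ω) :
    2 ^ (ω - k - 1) * ((k : ℚ) + 1) * dCoeff k ℓ / (k ! : ℚ) ^ 2
      = 2 ^ (ω - 2 * ℓ - 1) * ((2 * ℓ + 1)! : ℚ) / (ℓ ! : ℚ) ^ 2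
          * ((k + 1).choose (2 * ℓ + 1) : ℚ) := by
  rw [dCoeff, if_pos hk, cast_choose ℚ (by omega : 2 * ℓ + 1 ≤ k + 1),
    show k + 1 - (2 * ℓ + 1) = k - 2 * ℓ by omega,
    show ω - 2 * ℓ - 1 = (ω - k - 1) + (k - 2 * ℓ) by omega, pow_add, factorial_succ k]
  push_cast
  field_simp

lemma eCoeff_eq_choose {ω ℓ : ℕ} (h : 2 * ℓ + 2 ≤ ω) :
    eCoeff ω ℓ = ((ω - 1)! : ℚ) * ((ω - 2)! : ℚ)
      * (2 ^ (ω - 2 * ℓ - 1) * ((2 * ℓ + 1)! : ℚ) / (ℓ ! : ℚ) ^ 2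
          * (ω.choose (2 * ℓ + 2) : ℚ)) := by
  obtain ⟨m, rfl⟩ : ∃ m, ω = 2 * ℓ + 2 + m := ⟨ω - (2 * ℓ + 2), by omega⟩
  rw [eCoeff, if_pos h, cast_choose ℚ h,
    show 2 * ℓ + 2 + m - 2 * ℓ - 1 = m + 1 by omega,
    show 2 * ℓ + 2 + m - 2 * ℓ - 2 = m by omega,
    show 2 * ℓ + 2 + m - (2 * ℓ + 2) = m by omega,
    factorial_succ (2 * ℓ + 1), factorial_succ ℓ]
  push_cast
  field_simp
  ring

/-- The closed form underlying equation (A-5) of the appendix: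
`(ω-1)!·(ω-2)!·Σ_{k=2ℓ}^{ω-2} 2^(ω-k-1)·(k+1)·d(k,ℓ)/(k!)² = e(ω,ℓ)`. -/
theorem A5_coefficient (ω ℓ : ℕ) (hω : 2 ≤ ω) (hℓ : 2 * ℓ ≤ ω - 2) :
    ((ω - 1).factorial : ℚ) * ((ω - 2).factorial : ℚ) *
        ∑ k ∈ Finset.Icc (2 * ℓ) (ω - 2),
          2 ^ (ω - k - 1) * ((k : ℚ) + 1) * dCoeff k ℓ / ((k.factorial : ℚ)) ^ 2
      = eCoeff ω ℓ := by
  have hsum : ∑ k ∈ Icc (2 * ℓ) (ω - 2), ((k + 1).choose (2 * ℓ + 1) : ℚ)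
      = ω.choose (2 * ℓ + 2) := by
    rw [← cast_sum, sum_Icc_succ_choose_succ, show ω - 2 + 2 = ω by omega]
  rw [eCoeff_eq_choose (by omega), ← hsum]
  congr 1
  rw [mul_sum]
  refine sum_congr rfl fun k hk => ?_
  obtain ⟨hk₁, hk₂⟩ := mem_Icc.1 hk
  exact two_pow_mul_succ_mul_dCoeff_div hk₁ (by omega)
end

section
/- For all natural numbers γ ≥ 2 and ℓ ≥ 1 with 2ℓ ≤ γ, the following identity of rational numbers holds: e(γ,ℓ−1) = 2(γ−1)(γ−2)·e(γ−1,ℓ−1) + 2(γ−1)²·d(γ−2,ℓ−1), where by convention e(γ−1,ℓ−1) := 0 when 2ℓ > γ−1 and d(γ−2,ℓ−1) := 0 when 2(ℓ−1) > γ−2. -/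
/-!
Write `γ = m + 2k + 2` and `ℓ = k + 1`. All three terms of the recurrence are integer multiples
of one rational number `c = 2^m·((γ-1)!)²·(γ-2)! / (m!·(k+1)!·k!)`: the left-hand side is `γ·c`,
the `e`-term on the right is `m·c` (it vanishes with `m = 0`) and the `d`-term is `2(k+1)·c`.
The recurrence is then just `γ = m + 2(k+1)`.
-/

namespace ECoeff

/-- The number `c` of the header, indexed by `m = γ - 2k - 2` and `k = ℓ - 1`. -/
def commonFactor (m k : ℕ) : ℚ :=
  2 ^ m * ((m + 2 * k + 1).factorial : ℚ) ^ 2 * ((m + 2 * k).factorial : ℚ)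
    / ((m.factorial : ℚ) * ((k + 1).factorial : ℚ) * (k.factorial : ℚ))

theorem eCoeff_add (m k : ℕ) :
    eCoeff (m + 2 * k + 2) k = (m + 2 * k + 2) * commonFactor m k := by
  rw [eCoeff, if_pos (by omega), show m + 2 * k + 2 - 2 * k - 2 = m by omega,
    show m + 2 * k + 2 - 1 = m + 2 * k + 1 by omega, show m + 2 * k + 2 - 2 = m + 2 * k by omega,
    show m + 2 * k + 2 = m + 2 * k + 1 + 1 by ring, Nat.factorial_succ, commonFactor]
  push_cast
  ring

theorem succ_mul_commonFactor_succ (m k : ℕ) :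
    (m + 1) * commonFactor (m + 1) k
      = 2 * (m + 2 * k + 2) ^ 2 * (m + 2 * k + 1) * commonFactor m k := by
  rw [commonFactor, commonFactor, show m + 1 + 2 * k + 1 = m + 2 * k + 1 + 1 by ring,
    show m + 1 + 2 * k = m + 2 * k + 1 by ring, Nat.factorial_succ (m + 2 * k + 1),
    Nat.factorial_succ (m + 2 * k), Nat.factorial_succ m]
  push_cast
  field_simp
  ring

theorem two_mul_mul_eCoeff_pred (m k : ℕ) :
    2 * (m + 2 * k + 1) * (m + 2 * k) * eCoeff (m + 2 * k + 1) k = m * commonFactor m k := by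
  rcases m with _ | m
  · rw [eCoeff, if_neg (by omega)]
    simp
  · rw [show m + 1 + 2 * k + 1 = m + 2 * k + 2 by ring, eCoeff_add]
    push_cast
    linear_combination (-1 : ℚ) * succ_mul_commonFactor_succ m k

theorem two_mul_sq_mul_dCoeff (m k : ℕ) :
    2 * (m + 2 * k + 1) ^ 2 * dCoeff (m + 2 * k) k = (2 * k + 2) * commonFactor m k := by
  rw [dCoeff, if_pos (by omega), show m + 2 * k - 2 * k = m by omega, commonFactor,
    Nat.factorial_succ (m + 2 * k), Nat.factorial_succ k]
  push_cast
  field_simp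

end ECoeff

open ECoeff in
theorem e_recurrence_general (γ ℓ : ℕ) (hℓ₁ : 1 ≤ ℓ) (hℓ : 2 * ℓ ≤ γ) :
    eCoeff γ (ℓ - 1)
      = 2 * ((γ : ℚ) - 1) * ((γ : ℚ) - 2) * eCoeff (γ - 1) (ℓ - 1)
        + 2 * ((γ : ℚ) - 1) ^ 2 * dCoeff (γ - 2) (ℓ - 1) := by
  obtain ⟨k, rfl⟩ : ∃ k, ℓ = k + 1 := ⟨ℓ - 1, by omega⟩
  obtain ⟨m, rfl⟩ : ∃ m, γ = m + 2 * k + 2 := ⟨γ - 2 * k - 2, by omega⟩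
  rw [Nat.add_sub_cancel, show m + 2 * k + 2 - 1 = m + 2 * k + 1 by omega,
    show m + 2 * k + 2 - 2 = m + 2 * k by omega]
  push_cast
  linear_combination eCoeff_add m k - two_mul_mul_eCoeff_pred m k - two_mul_sq_mul_dCoeff m k

/-- The coefficient recurrence behind formula (T1,1):
`e(γ,ℓ-1) = 2(γ-1)(γ-2)·e(γ-1,ℓ-1) + 2(γ-1)²·d(γ-2,ℓ-1)`. -/
theorem e_recurrence (γ ℓ : ℕ) (hγ : 2 ≤ γ) (hℓ₁ : 1 ≤ ℓ) (hℓ : 2 * ℓ ≤ γ) :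
    eCoeff γ (ℓ - 1)
      = 2 * ((γ : ℚ) - 1) * ((γ : ℚ) - 2) * eCoeff (γ - 1) (ℓ - 1)
        + 2 * ((γ : ℚ) - 1) ^ 2 * dCoeff (γ - 2) (ℓ - 1) :=
  e_recurrence_general γ ℓ hℓ₁ hℓ
end
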